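/- arXiv:2310.00539 — 6 statements merged into one kernel-verified Lean document; each statement's English description precedes it below -/
import Mathlib

section
/- Let μ₁ > μ₂ ≥ μ₃ ≥ ... ≥ μ_K be the means of K Gaussian arms with common variance σ² > 0. Define Δ_i = μ₁ - μ_i for i ≠ 1 and Δ₁ = Δ₂. Let ẕ_i = Δ₂²/(2Δ_i²) for i ≠ 1 and ẕ₁ = 1/2, and w̲_i = (ẕ_i/(1-ẕ_i))/∑_{j=1}^K(ẕ_j/(1-ẕ_j)). Then the quantity T̲ := (w̲₁ · min over proportions value)⁻¹ evaluates to T̲ = ∑_{i=1}^K 4σ²/(Δ_i² + (Δ_i² - Δ₂²)). Equivalently, with g(w̲) = w̲₁ · k_i(w̲_i/w̲₁) where k_i(x) = (x/(1+x))·Δ_i²/(2σ²), one has g(w̲) = (Δ₂²/(4σ²)) / ∑_{a=1}^K Δ₂²/(2Δ_a² - Δ₂²). -/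
/-- Lemma 3 (Gaussian bandits): the value of the objective at the proportion w̲ and the
resulting expression of T̲(μ) = ∑ᵢ 4σ²/(Δᵢ² + (Δᵢ² − Δ₂²)). -/
theorem gaussian_Tbar_formula
    (K : ℕ) (hK : 2 ≤ K) (σ : ℝ) (hσ : 0 < σ) (μ : Fin K → ℝ)
    (hmono : ∀ i j : Fin K, i ≤ j → μ j ≤ μ i)
    (hbest : μ ⟨1, by omega⟩ < μ ⟨0, by omega⟩)
    (Δ : Fin K → ℝ)
    (hΔ : ∀ i : Fin K, Δ i =
      if i.val = 0 then μ ⟨0, by omega⟩ - μ ⟨1, by omega⟩ else μ ⟨0, by omega⟩ - μ i)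
    (z : Fin K → ℝ)
    (hz : ∀ i : Fin K, z i =
      if i.val = 0 then 1/2 else (Δ ⟨1, by omega⟩)^2 / (2 * (Δ i)^2))
    (w : Fin K → ℝ)
    (hw : ∀ i : Fin K, w i = (z i / (1 - z i)) / ∑ j, z j / (1 - z j))
    (k : Fin K → ℝ → ℝ)
    (hk : ∀ (i : Fin K) (x : ℝ), k i x = (x / (1 + x)) * (Δ i)^2 / (2 * σ^2)) :
    (∀ i : Fin K, i ≠ ⟨0, by omega⟩ →
      w ⟨0, by omega⟩ * k i (w i / w ⟨0, by omega⟩) =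
        ((Δ ⟨1, by omega⟩)^2 / (4 * σ^2)) /
          ∑ a, (Δ ⟨1, by omega⟩)^2 / (2 * (Δ a)^2 - (Δ ⟨1, by omega⟩)^2))
    ∧ (w ⟨0, by omega⟩ * k ⟨1, by omega⟩ (w ⟨1, by omega⟩ / w ⟨0, by omega⟩))⁻¹ =
        ∑ i, 4 * σ^2 / ((Δ i)^2 + ((Δ i)^2 - (Δ ⟨1, by omega⟩)^2)) := by
  have hK0 : 0 < K := by omega
  have hK1 : 1 < K := by omega
  set i0 : Fin K := ⟨0, by omega⟩ with hi0
  set i1 : Fin K := ⟨1, by omega⟩ with hi1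
  set D : ℝ := Δ i1 with hD
  have hΔ1 : Δ i1 = μ i0 - μ i1 := by rw [hΔ i1]; norm_num [hi1]
  have hΔ0 : Δ i0 = D := by rw [hΔ i0, hD, hΔ1]; norm_num [hi0]
  have hD0 : 0 < D := by rw [hD, hΔ1]; linarith
  have hΔge : ∀ i : Fin K, D ≤ Δ i := by
    intro i
    by_cases h : i.val = 0
    · have : i = i0 := Fin.ext h
      rw [this, hΔ0]
    · rw [hΔ i, if_neg h]
      have h1 : i1 ≤ i := by
        simp only [Fin.le_def, hi1]
        omega
      have := hmono i1 i h1
      rw [hD, hΔ1]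
      linarith
  have hΔpos : ∀ i, 0 < Δ i := fun i => lt_of_lt_of_le hD0 (hΔge i)
  have hD2 : (0:ℝ) < D^2 := pow_pos hD0 2
  have hDne : D ≠ 0 := ne_of_gt hD0
  have hσne : σ ≠ 0 := ne_of_gt hσ
  have hbpos : ∀ i, (0:ℝ) < 2 * (Δ i)^2 := fun i => by nlinarith [hΔpos i]
  have hbne : ∀ i, (2 * (Δ i)^2) ≠ 0 := fun i => ne_of_gt (hbpos i)
  have hcpos : ∀ i, 0 < 2 * (Δ i)^2 - D^2 := by
    intro i
    nlinarith [hΔge i, hΔpos i, hD0]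
  have hcne : ∀ i, (2 * (Δ i)^2 - D^2) ≠ 0 := fun i => ne_of_gt (hcpos i)
  have hz' : ∀ i, z i = D^2 / (2 * (Δ i)^2) := by
    intro i
    rw [hz i]
    by_cases h : i.val = 0
    · have hi : i = i0 := Fin.ext h
      rw [if_pos h, hi, hΔ0,
        eq_div_iff (by nlinarith [hD2] : (0:ℝ) < 2 * D^2).ne']
      ring
    · rw [if_neg h]
  have hterm : ∀ j, z j / (1 - z j) = D^2 / (2 * (Δ j)^2 - D^2) := by
    intro j
    have h1z : 1 - z j = (2 * (Δ j)^2 - D^2) / (2 * (Δ j)^2) := by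
      rw [hz' j, one_sub_div (hbne j)]
    have h1zpos : 0 < 1 - z j := h1z ▸ div_pos (hcpos j) (hbpos j)
    rw [div_eq_div_iff (ne_of_gt h1zpos) (hcne j), hz' j]
    field_simp [hbne j]
    rw [sub_div, mul_div_assoc, div_self (pow_ne_zero 2 (hΔpos j).ne'), mul_one]
  set S : ℝ := ∑ j, D^2 / (2 * (Δ j)^2 - D^2) with hS
  have hSpos : 0 < S := by
    rw [hS]
    apply Finset.sum_pos
    · intro j _
      exact div_pos hD2 (hcpos j)
    · have : Nonempty (Fin K) := ⟨i0⟩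
      exact Finset.univ_nonempty
  have hSne : S ≠ 0 := ne_of_gt hSpos
  have hsum : (∑ j, z j / (1 - z j)) = S := by
    rw [hS]
    exact Finset.sum_congr rfl fun j _ => hterm j
  have hwin : ∀ i, w i = (D^2 / (2 * (Δ i)^2 - D^2)) / S := by
    intro i; rw [hw i, hsum, hterm i]
  have hw0 : w i0 = 1 / S := by
    rw [hwin i0]
    have h6 : 2 * (Δ i0)^2 - D^2 = D^2 := by rw [hΔ0]; ring
    rw [h6, div_self (pow_ne_zero 2 hDne)]
  have hrat : ∀ i, w i / w i0 = D^2 / (2 * (Δ i)^2 - D^2) := by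
    intro i
    rw [hwin i, hw0, div_div_div_comm, div_self hSne, div_one, div_one]
  have hk' : ∀ i, k i (w i / w i0) = D^2 / (4 * σ^2) := by
    intro i
    rw [hk, hrat i]
    have h5 : 1 + D^2 / (2 * (Δ i)^2 - D^2) = (2 * (Δ i)^2) / (2 * (Δ i)^2 - D^2) := by
      rw [eq_div_iff (hcne i), add_mul, one_mul, div_mul_cancel₀ _ (hcne i)]
      ring
    rw [h5, div_div_div_comm, div_self (hcne i), div_one]
    rw [div_mul_eq_mul_div, div_div,
      div_eq_div_iff (mul_ne_zero (hbne i) (by nlinarith [hσ] : (2 * σ^2:ℝ) ≠ 0))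
        (by nlinarith [hσ] : (4 * σ^2:ℝ) ≠ 0)]
    ring
  constructor
  · intro i _
    rw [hk' i, hw0]
    ring
  · rw [hk' i1, hw0]
    have hR : ∀ i : Fin K, 4 * σ^2 / ((Δ i)^2 + ((Δ i)^2 - D^2))
        = (D^2 / (2 * (Δ i)^2 - D^2)) * (4 * σ^2 / D^2) := by
      intro i
      rw [div_mul_div_comm]
      rw [div_eq_div_iff (by nlinarith [hcpos i] : (0:ℝ) < (Δ i)^2 + ((Δ i)^2 - D^2)).ne'
        (mul_pos (hcpos i) hD2).ne']
      ring
    rw [Finset.sum_congr rfl fun i _ => hR i, ← Finset.sum_mul, ← hS]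
    rw [one_div, inv_mul_eq_div, inv_div, div_div_eq_mul_div, mul_div_assoc]
end

section
/- Let h : [0,1] → ℝ be concave with h(1) = 0. For natural numbers a, b with a + b ≥ 1, define F(a,b) = (a+b)·h(b/(a+b)). Then F(a, b+1) ≥ F(a, b); that is, incrementing b does not decrease F. (This is case (2) of the lemma that t·f_i(w^t; μ) is non-decreasing in t when arm i is played.) -/
/-- If h is concave on [0,1] with h(1) = 0, then F(a,b) = (a+b)·h(b/(a+b)) does not
decrease when b is incremented. -/
theorem perspective_nondecreasing_in_b
    (h : ℝ → ℝ) (hconc : ConcaveOn ℝ (Set.Icc (0:ℝ) 1) h) (h1 : h 1 = 0)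
    (a b : ℕ) (hab : 1 ≤ a + b) :
    ((a : ℝ) + b) * h ((b : ℝ) / ((a : ℝ) + b)) ≤
      ((a : ℝ) + b + 1) * h (((b : ℝ) + 1) / ((a : ℝ) + b + 1)) := by
  set n : ℝ := (a : ℝ) + b with hn
  have hn1 : (1 : ℝ) ≤ n := by
    have := hab
    have : (1 : ℝ) ≤ ((a + b : ℕ) : ℝ) := by exact_mod_cast this
    simpa [hn] using this
  have hnpos : 0 < n := lt_of_lt_of_le one_pos hn1
  have hn1pos : 0 < n + 1 := by linarith
  have hx : (b : ℝ) / n ∈ Set.Icc (0:ℝ) 1 := by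
    constructor
    · positivity
    · rw [div_le_one hnpos]
      have : (0:ℝ) ≤ (a:ℝ) := Nat.cast_nonneg a
      linarith [hn]
  have hy : (1:ℝ) ∈ Set.Icc (0:ℝ) 1 := by norm_num
  have hw1 : (0:ℝ) ≤ n / (n + 1) := by positivity
  have hw2 : (0:ℝ) ≤ 1 / (n + 1) := by positivity
  have hsum : n / (n + 1) + 1 / (n + 1) = 1 := by
    field_simp
  have key := hconc.2 hx hy hw1 hw2 hsum
  have hcomb : n / (n + 1) * ((b : ℝ) / n) + 1 / (n + 1) * 1 = ((b : ℝ) + 1) / (n + 1) := by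
    field_simp
  simp only [smul_eq_mul] at key
  rw [hcomb, h1] at key
  have : n / (n + 1) * h ((b : ℝ) / n) ≤ h (((b : ℝ) + 1) / (n + 1)) := by linarith [key]
  calc n * h ((b : ℝ) / n) = (n + 1) * (n / (n + 1) * h ((b : ℝ) / n)) := by
        field_simp
    _ ≤ (n + 1) * h (((b : ℝ) + 1) / (n + 1)) := by
        exact mul_le_mul_of_nonneg_left this (le_of_lt hn1pos)
end

section
/- Let h : [0,1] → ℝ≥0 be concave with h(0) = h(1) = 0. Then for any fixed c > 0, the function y ↦ (y + c)·h(c/(y+c)) is non-decreasing in y ∈ [0, ∞). Equivalently, y·k(c/y) is non-decreasing in y > 0 where k(x) = (1+x)·h(x/(1+x)). -/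
/-- From concavity with h(0)=0: slopes from 0 decrease, i.e. v·h(u) ≤ u·h(v)
for 0 < v ≤ u ≤ 1. -/
lemma slope_aux (h : ℝ → ℝ) (hconc : ConcaveOn ℝ (Set.Icc (0:ℝ) 1) h)
    (h0 : h 0 = 0) (u v : ℝ) (hv : 0 < v) (hvu : v ≤ u) (hu : u ≤ 1) :
    v * h u ≤ u * h v := by
  have hu0 : 0 < u := lt_of_lt_of_le hv hvu
  have hmem0 : (0:ℝ) ∈ Set.Icc (0:ℝ) 1 := by norm_num
  have hmemu : u ∈ Set.Icc (0:ℝ) 1 := ⟨hu0.le, hu⟩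
  have ha : (0:ℝ) ≤ 1 - v/u := by
    have : v/u ≤ 1 := (div_le_one hu0).mpr hvu
    linarith
  have hb : (0:ℝ) ≤ v/u := by positivity
  have hab : (1 - v/u) + v/u = 1 := by ring
  have := hconc.2 hmem0 hmemu ha hb hab
  simp only [smul_eq_mul, mul_zero, zero_add, h0] at this
  have hvv : v/u * u = v := div_mul_cancel₀ v hu0.ne'
  rw [hvv] at this
  have := mul_le_mul_of_nonneg_left this hu0.le
  calc v * h u = u * (v/u * h u) := by field_simp
    _ ≤ u * h v := this

/-- For h concave and nonnegative on [0,1] with h(0) = h(1) = 0 and c > 0,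
y ↦ (y+c)·h(c/(y+c)) is non-decreasing on [0,∞); equivalently y·k(c/y) is
non-decreasing in y > 0 where k(x) = (1+x)·h(x/(1+x)). -/
theorem perspective_nondecreasing_real
    (h : ℝ → ℝ) (hconc : ConcaveOn ℝ (Set.Icc (0:ℝ) 1) h)
    (hnn : ∀ z ∈ Set.Icc (0:ℝ) 1, 0 ≤ h z) (h0 : h 0 = 0) (h1 : h 1 = 0)
    (c : ℝ) (hc : 0 < c)
    (k : ℝ → ℝ) (hk : ∀ x, k x = (1 + x) * h (x / (1 + x))) :
    MonotoneOn (fun y => (y + c) * h (c / (y + c))) (Set.Ici (0:ℝ))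
    ∧ ∀ y₁ y₂ : ℝ, 0 < y₁ → y₁ ≤ y₂ → y₁ * k (c / y₁) ≤ y₂ * k (c / y₂) := by
  have main : MonotoneOn (fun y => (y + c) * h (c / (y + c))) (Set.Ici (0:ℝ)) := by
    intro y₁ hy₁ y₂ hy₂ h12
    simp only [Set.mem_Ici] at hy₁ hy₂
    set a := y₁ + c with ha_def
    set b := y₂ + c with hb_def
    have ha : 0 < a := by positivity
    have hb : 0 < b := by positivity
    have hab : a ≤ b := by simp [ha_def, hb_def]; linarith
    set u := c / a with hu_def
    set v := c / b with hv_def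
    have hv : 0 < v := div_pos hc hb
    have hvu : v ≤ u := by apply div_le_div_of_nonneg_left hc.le ha hab
    have hu1 : u ≤ 1 := by rw [hu_def, div_le_one ha]; linarith
    have key := slope_aux h hconc h0 u v hv hvu hu1
    have hu0 : 0 < u := lt_of_lt_of_le hv hvu
    have hau : a * u = c := mul_div_cancel₀ c ha.ne'
    have hbv : b * v = c := mul_div_cancel₀ c hb.ne'
    show a * h u ≤ b * h v
    have huv : 0 < u * v := mul_pos hu0 hv
    rw [← mul_le_mul_iff_of_pos_right huv]
    calc a * h u * (u * v) = (a * u) * (v * h u) := by ring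
      _ = c * (v * h u) := by rw [hau]
      _ ≤ c * (u * h v) := by exact mul_le_mul_of_nonneg_left key hc.le
      _ = (b * v) * (u * h v) := by rw [hbv]
      _ = b * h v * (u * v) := by ring
  refine ⟨main, fun y₁ y₂ hy₁ h12 => ?_⟩
  have hy₂ : 0 < y₂ := lt_of_lt_of_le hy₁ h12
  have eq : ∀ y : ℝ, 0 < y → y * k (c / y) = (y + c) * h (c / (y + c)) := by
    intro y hy
    have hyc : (0:ℝ) < y + c := by positivity
    have h1' : 1 + c / y = (y + c) / y := by field_simp
    have h2' : (c / y) / (1 + c / y) = c / (y + c) := by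
      rw [h1']; field_simp
    rw [hk, h2', h1']
    field_simp
  rw [eq y₁ hy₁, eq y₂ hy₂]
  exact main hy₁.le hy₂.le h12
end

section
/- Let d(μ, μ') denote the KL divergence of a canonical one-parameter exponential family parametrized by mean, so that d(μ, μ') = μ·(θ(μ) - θ(μ')) + A(θ(μ')) - A(θ(μ)) where A is convex twice-differentiable and θ is the inverse of A'. Let R ⊂ ℝ be a bounded region of means and fix μ₀ ∈ ℝ. Then there exist constants a, b ≥ 0 such that d(μ, μ') ≤ a·d(μ, μ₀) + b for every μ ∈ ℝ and every μ' ∈ R. -/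
/-- Lemma (KL comparison): for a one-parameter exponential family parametrized by its
mean, with R a bounded region of means whose closure lies in the mean space and μ₀ a
fixed mean, there are constants a, b ≥ 0 with d(μ, μ') ≤ a·d(μ, μ₀) + b for every mean
μ and every μ' ∈ R. -/
theorem kl_linear_comparison
    (Θ : Set ℝ) (hΘ : Convex ℝ Θ)
    (A θfn : ℝ → ℝ)
    (hA : ContDiffOn ℝ 2 A Θ)
    (hA'' : ∀ x ∈ Θ, 0 < iteratedDerivWithin 2 A Θ x)
    (hθ : ∀ x ∈ Θ, θfn (derivWithin A Θ x) = x)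
    (M : Set ℝ) (hM : M = (fun x => derivWithin A Θ x) '' Θ)
    (d : ℝ → ℝ → ℝ)
    (hd : ∀ μ μ', d μ μ' = μ * (θfn μ - θfn μ') + A (θfn μ') - A (θfn μ))
    (R : Set ℝ) (hRbdd : Bornology.IsBounded R) (hRM : closure R ⊆ M)
    (μ₀ : ℝ) (hμ₀ : μ₀ ∈ M) :
    ∃ a b : ℝ, 0 ≤ a ∧ 0 ≤ b ∧ ∀ μ ∈ M, ∀ μ' ∈ R, d μ μ' ≤ a * d μ μ₀ + b := by
  rcases R.eq_empty_or_nonempty with hRe | hRne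
  · exact ⟨0, 0, le_rfl, le_rfl, fun μ _ μ' hμ' => by simp [hRe] at hμ'⟩
  by_cases hsub : Θ.Subsingleton
  · refine ⟨1, 0, zero_le_one, le_rfl, fun μ hμ μ' hμ' => ?_⟩
    have h1 : μ' ∈ M := hRM (subset_closure hμ')
    have h2 : μ' = μ₀ := by
      rw [hM] at h1 hμ₀
      obtain ⟨x, hx, rfl⟩ := h1
      obtain ⟨y, hy, hy'⟩ := hμ₀
      rw [← hy', hsub hx hy]
    rw [h2]; linarith
  -- main case: Θ has at least two points
  obtain ⟨p, hp, q, hq, hpq⟩ := Set.not_subsingleton_iff.mp hsub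
  have hint : (interior Θ).Nonempty := by
    rcases lt_or_gt_of_ne hpq with h | h
    · obtain ⟨c, hc⟩ := Set.nonempty_Ioo.mpr h
      exact ⟨c, interior_maximal (fun y hy =>
        hΘ.ordConnected.out hp hq (Set.Ioo_subset_Icc_self hy)) isOpen_Ioo hc⟩
    · obtain ⟨c, hc⟩ := Set.nonempty_Ioo.mpr h
      exact ⟨c, interior_maximal (fun y hy =>
        hΘ.ordConnected.out hq hp (Set.Ioo_subset_Icc_self hy)) isOpen_Ioo hc⟩
  have hU : UniqueDiffOn ℝ Θ := uniqueDiffOn_convex hΘ hint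
  have hAd : DifferentiableOn ℝ A Θ := hA.differentiableOn (by norm_num)
  have hA'c : ContinuousOn (derivWithin A Θ) Θ :=
    (hA.derivWithin (m := 1) hU (by norm_num)).continuousOn
  -- strict monotonicity of A'
  have hmono : StrictMonoOn (derivWithin A Θ) Θ := by
    apply strictMonoOn_of_deriv_pos hΘ hA'c
    intro c hc
    have hcΘ : c ∈ Θ := interior_subset hc
    have h2 := hA'' c hcΘ
    have h22 : (2 : ℕ) = 1 + 1 := rfl
    rw [h22, iteratedDerivWithin_succ', iteratedDerivWithin_one] at h2
    rwa [derivWithin_of_mem_nhds (mem_interior_iff_mem_nhds.mp hc)] at h2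
  -- A is differentiable at interior points with deriv = derivWithin
  have hder : ∀ c ∈ interior Θ, DifferentiableAt ℝ A c ∧ deriv A c = derivWithin A Θ c := by
    intro c hc
    have hn := mem_interior_iff_mem_nhds.mp hc
    exact ⟨(hAd c (interior_subset hc)).differentiableAt hn,
      (derivWithin_of_mem_nhds hn).symm⟩
  -- tangent line inequality
  have tangent : ∀ x ∈ Θ, ∀ t ∈ Θ, derivWithin A Θ x * (t - x) ≤ A t - A x := by
    intro x hx t ht
    rcases le_total x t with h | h
    · have hsubI : Set.Icc x t ⊆ Θ := hΘ.ordConnected.out hx ht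
      have hIoo : Set.Ioo x t ⊆ interior Θ :=
        interior_maximal (Set.Ioo_subset_Icc_self.trans hsubI) isOpen_Ioo
      have hdiff : DifferentiableOn ℝ A (interior (Set.Icc x t)) := by
        rw [interior_Icc]
        exact fun c hc => ((hder c (hIoo hc)).1).differentiableWithinAt
      have hbound : ∀ c ∈ interior (Set.Icc x t), derivWithin A Θ x ≤ deriv A c := by
        rw [interior_Icc]
        intro c hc
        rw [(hder c (hIoo hc)).2]
        exact hmono.monotoneOn hx (interior_subset (hIoo hc)) hc.1.le
      exact (convex_Icc x t).mul_sub_le_image_sub_of_le_deriv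
        (hA.continuousOn.mono hsubI) hdiff hbound
        x (Set.left_mem_Icc.mpr h) t (Set.right_mem_Icc.mpr h) h
    · have hsubI : Set.Icc t x ⊆ Θ := hΘ.ordConnected.out ht hx
      have hIoo : Set.Ioo t x ⊆ interior Θ :=
        interior_maximal (Set.Ioo_subset_Icc_self.trans hsubI) isOpen_Ioo
      have hdiff : DifferentiableOn ℝ A (interior (Set.Icc t x)) := by
        rw [interior_Icc]
        exact fun c hc => ((hder c (hIoo hc)).1).differentiableWithinAt
      have hbound : ∀ c ∈ interior (Set.Icc t x), deriv A c ≤ derivWithin A Θ x := by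
        rw [interior_Icc]
        intro c hc
        rw [(hder c (hIoo hc)).2]
        exact hmono.monotoneOn (interior_subset (hIoo hc)) hx hc.2.le
      have h2 := (convex_Icc t x).image_sub_le_mul_sub_of_deriv_le
        (hA.continuousOn.mono hsubI) hdiff hbound
        t (Set.left_mem_Icc.mpr h) x (Set.right_mem_Icc.mpr h) h
      have e : derivWithin A Θ x * (t - x) = -(derivWithin A Θ x * (x - t)) := by ring
      linarith
  -- basic facts about M
  have hMθ : ∀ μ ∈ M, θfn μ ∈ Θ ∧ derivWithin A Θ (θfn μ) = μ := by
    intro μ hμ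
    rw [hM] at hμ
    obtain ⟨x, hx, rfl⟩ := hμ
    rw [hθ x hx]
    exact ⟨hx, rfl⟩
  obtain ⟨hx₀Θ, hA'x₀⟩ := hMθ μ₀ hμ₀
  set x₀ := θfn μ₀ with hx₀def
  -- key inequality
  have key : ∀ μ ∈ M, ∀ t ∈ Θ, μ * (t - x₀) + A x₀ - A t ≤ d μ μ₀ := by
    intro μ hμ t ht
    obtain ⟨hxΘ, hA'x⟩ := hMθ μ hμ
    have h1 := tangent (θfn μ) hxΘ t ht
    rw [hA'x] at h1
    rw [hd]
    have e : μ * (t - x₀) = μ * (θfn μ - x₀) + μ * (t - θfn μ) := by ring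
    linarith
  have dnonneg : ∀ μ ∈ M, 0 ≤ d μ μ₀ := by
    intro μ hμ
    have h1 := key μ hμ x₀ hx₀Θ
    have e : μ * (x₀ - x₀) = 0 := by ring
    linarith
  -- monotonicity of θfn on M
  have hθmono : ∀ μa ∈ M, ∀ μb ∈ M, μa ≤ μb → θfn μa ≤ θfn μb := by
    intro μa ha μb hb hab
    by_contra hcon
    push_neg at hcon
    have := hmono (hMθ μb hb).1 (hMθ μa ha).1 hcon
    rw [(hMθ μa ha).2, (hMθ μb hb).2] at this
    linarith
  -- upper linear bound on μ
  have hup : ∃ a c : ℝ, 0 ≤ a ∧ ∀ μ ∈ M, μ ≤ a * d μ μ₀ + c := by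
    by_cases hex : ∃ t ∈ Θ, x₀ < t
    · obtain ⟨t, ht, hlt⟩ := hex
      have h2 : 0 < t - x₀ := by linarith
      refine ⟨(t - x₀)⁻¹, (A t - A x₀) / (t - x₀), by positivity, fun μ hμ => ?_⟩
      have h1 := key μ hμ t ht
      have h3 : μ * (t - x₀) ≤ d μ μ₀ + (A t - A x₀) := by linarith
      calc μ = μ * (t - x₀) / (t - x₀) := by field_simp
        _ ≤ (d μ μ₀ + (A t - A x₀)) / (t - x₀) := (div_le_div_iff_of_pos_right h2).mpr h3
        _ = (t - x₀)⁻¹ * d μ μ₀ + (A t - A x₀) / (t - x₀) := by field_simp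
    · push_neg at hex
      refine ⟨0, μ₀, le_rfl, fun μ hμ => ?_⟩
      obtain ⟨hxΘ, hA'x⟩ := hMθ μ hμ
      have h1 := hmono.monotoneOn hxΘ hx₀Θ (hex _ hxΘ)
      rw [hA'x, hA'x₀] at h1
      linarith
  -- lower linear bound on μ
  have hlow : ∃ a c : ℝ, 0 ≤ a ∧ ∀ μ ∈ M, -μ ≤ a * d μ μ₀ + c := by
    by_cases hex : ∃ t ∈ Θ, t < x₀
    · obtain ⟨t, ht, hlt⟩ := hex
      have h2 : 0 < x₀ - t := by linarith
      refine ⟨(x₀ - t)⁻¹, (A t - A x₀) / (x₀ - t), by positivity, fun μ hμ => ?_⟩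
      have h1 := key μ hμ t ht
      have h3 : -μ * (x₀ - t) ≤ d μ μ₀ + (A t - A x₀) := by nlinarith
      calc -μ = -μ * (x₀ - t) / (x₀ - t) := by field_simp
        _ ≤ (d μ μ₀ + (A t - A x₀)) / (x₀ - t) := (div_le_div_iff_of_pos_right h2).mpr h3
        _ = (x₀ - t)⁻¹ * d μ μ₀ + (A t - A x₀) / (x₀ - t) := by field_simp
    · push_neg at hex
      refine ⟨0, -μ₀, le_rfl, fun μ hμ => ?_⟩
      obtain ⟨hxΘ, hA'x⟩ := hMθ μ hμ
      have h1 := hmono.monotoneOn hx₀Θ hxΘ (hex _ hxΘ)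
      rw [hA'x, hA'x₀] at h1
      linarith
  obtain ⟨a₁, c₁, ha₁, hb₁⟩ := hup
  obtain ⟨a₂, c₂, ha₂, hb₂⟩ := hlow
  -- absolute value bound
  set a' := a₁ + a₂ with ha'def
  set b' := max (max c₁ c₂) 0 with hb'def
  have ha'0 : 0 ≤ a' := by positivity
  have hb'0 : 0 ≤ b' := le_max_right _ _
  have habs : ∀ μ ∈ M, |μ| ≤ a' * d μ μ₀ + b' := by
    intro μ hμ
    have h1 := hb₁ μ hμ
    have h2 := hb₂ μ hμ
    have hd0 := dnonneg μ hμ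
    have hp1 : 0 ≤ a₁ * d μ μ₀ := mul_nonneg ha₁ hd0
    have hp2 : 0 ≤ a₂ * d μ μ₀ := mul_nonneg ha₂ hd0
    have hc1 : c₁ ≤ b' := le_trans (le_max_left _ _) (le_max_left _ _)
    have hc2 : c₂ ≤ b' := le_trans (le_max_right _ _) (le_max_left _ _)
    have e : a' * d μ μ₀ = a₁ * d μ μ₀ + a₂ * d μ μ₀ := by rw [ha'def]; ring
    rw [abs_le]
    constructor <;> linarith
  -- bounds over R via compactness
  have hKcomp : IsCompact (closure R) := hRbdd.isCompact_closure
  have hKne : (closure R).Nonempty := hRne.closure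
  obtain ⟨m₁, hm₁⟩ := hKcomp.exists_isLeast hKne
  obtain ⟨m₂, hm₂⟩ := hKcomp.exists_isGreatest hKne
  have hm₁M : m₁ ∈ M := hRM hm₁.1
  have hm₂M : m₂ ∈ M := hRM hm₂.1
  set xl := θfn m₁ with hxl
  set xr := θfn m₂ with hxr
  have hxlΘ : xl ∈ Θ := (hMθ m₁ hm₁M).1
  have hxrΘ : xr ∈ Θ := (hMθ m₂ hm₂M).1
  have hxlr : xl ≤ xr := hθmono m₁ hm₁M m₂ hm₂M (hm₁.2 hm₂.1)
  have hIccΘ : Set.Icc xl xr ⊆ Θ := hΘ.ordConnected.out hxlΘ hxrΘ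
  obtain ⟨CA, hCA⟩ := isCompact_Icc.exists_bound_of_continuousOn
    (hA.continuousOn.mono hIccΘ)
  have hCA0 : 0 ≤ CA := le_trans (norm_nonneg _) (hCA xl ⟨le_rfl, hxlr⟩)
  set L := |x₀| + max |xl| |xr| with hLdef
  have hL0 : 0 ≤ L := by
    have := abs_nonneg xl
    have := le_max_left |xl| |xr|
    have := abs_nonneg x₀
    linarith
  have hθ'mem : ∀ μ' ∈ R, θfn μ' ∈ Set.Icc xl xr := by
    intro μ' hμ'
    have hμ'K : μ' ∈ closure R := subset_closure hμ'
    have hμ'M : μ' ∈ M := hRM hμ'K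
    exact ⟨hθmono m₁ hm₁M μ' hμ'M (hm₁.2 hμ'K), hθmono μ' hμ'M m₂ hm₂M (hm₂.2 hμ'K)⟩
  -- final constants
  refine ⟨1 + L * a', L * b' + CA + |A x₀|, by positivity, by positivity, ?_⟩
  intro μ hμ μ' hμ'
  have hμ'M : μ' ∈ M := hRM (subset_closure hμ')
  have hx'I := hθ'mem μ' hμ'
  have h1 := habs μ hμ
  have h2 : |x₀ - θfn μ'| ≤ L := by
    have ha : |θfn μ'| ≤ max |xl| |xr| := by
      rw [abs_le]
      constructor
      · have := neg_abs_le xl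
        have := le_max_left |xl| |xr|
        have := hx'I.1
        linarith
      · have := le_abs_self xr
        have := le_max_right |xl| |xr|
        have := hx'I.2
        linarith
    calc |x₀ - θfn μ'| ≤ |x₀| + |θfn μ'| := abs_sub _ _
      _ ≤ L := by rw [hLdef]; linarith
  have h3 : μ * (x₀ - θfn μ') ≤ |μ| * L := by
    calc μ * (x₀ - θfn μ') ≤ |μ * (x₀ - θfn μ')| := le_abs_self _
      _ = |μ| * |x₀ - θfn μ'| := abs_mul _ _
      _ ≤ |μ| * L := mul_le_mul_of_nonneg_left h2 (abs_nonneg _)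
  have h4 : |μ| * L ≤ (a' * d μ μ₀ + b') * L := mul_le_mul_of_nonneg_right h1 hL0
  have h5 : A (θfn μ') ≤ CA := by
    have := hCA (θfn μ') hx'I
    rw [Real.norm_eq_abs] at this
    exact le_trans (le_abs_self _) this
  have h6 := neg_abs_le (A x₀)
  have e : d μ μ' - d μ μ₀ = μ * (x₀ - θfn μ') + A (θfn μ') - A x₀ := by
    rw [hd, hd]; ring
  have e2 : (a' * d μ μ₀ + b') * L = L * a' * d μ μ₀ + L * b' := by ring
  have e3 : (1 + L * a') * d μ μ₀ = d μ μ₀ + L * a' * d μ μ₀ := by ring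
  linarith
end

section
/- For every α ∈ [1, e/2] and any constants c₁, c₂ > 0, the real number x = (α/c₁)·[log(c₂·e/c₁^α) + log log(c₂/c₁^α)] satisfies c₁·x ≥ log(c₂·x^α), provided c₂/c₁^α ≥ e (so that the double logarithm is well-defined and nonnegative). -/
open Real

/-!
Put `C = c₂ / c₁^α ≥ e`, `L = log C ≥ 1` and `A = 1 + L + log L`, so that `c₁ x = α A` and
`c₂ x^α = C (α A)^α`. The claim becomes `L + α log (α A) ≤ α A`. Since `log L ≤ L - 1` we have
`A ≤ 2L`, hence `log (α A) ≤ log (2α) + log L ≤ 1 + log L` because `2α ≤ e`; together with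
`L ≤ α L` this gives the bound.
-/

lemma one_add_add_log_le_two_mul {L : ℝ} (hL : 1 ≤ L) : 1 + L + log L ≤ 2 * L := by
  linarith [log_le_sub_one_of_pos (by linarith : 0 < L)]

lemma add_mul_log_mul_le {α L : ℝ} (hα1 : 1 ≤ α) (hα2 : 2 * α ≤ exp 1) (hL : 1 ≤ L) :
    L + α * log (α * (1 + L + log L)) ≤ α * (1 + L + log L) := by
  have hα0 : 0 < α := by linarith
  have hA : 0 < α * (1 + L + log L) := by
    have := log_nonneg hL
    positivity
  have hlog_two_mul : log (2 * α) ≤ 1 := by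
    simpa using log_le_log (by positivity) hα2
  have hlog_le : log (α * (1 + L + log L)) ≤ 1 + log L :=
    calc log (α * (1 + L + log L)) ≤ log (2 * α * L) := by
          apply log_le_log hA
          nlinarith [one_add_add_log_le_two_mul hL]
      _ = log (2 * α) + log L := log_mul (by positivity) (by positivity)
      _ ≤ 1 + log L := by linarith
  have hL_le : L ≤ α * L := le_mul_of_one_le_left (by linarith) hα1
  linarith [mul_le_mul_of_nonneg_left hlog_le hα0.le]

theorem garivier_kaufmann_lemma18_general
    (α c₁ c₂ : ℝ) (hα1 : 1 ≤ α) (hα2 : α ≤ exp 1 / 2)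
    (hc₁ : 0 < c₁) (hbig : exp 1 * c₁ ^ α ≤ c₂)
    (x : ℝ)
    (hx : x = α / c₁ * (log (c₂ * exp 1 / c₁ ^ α) + log (log (c₂ / c₁ ^ α)))) :
    log (c₂ * x ^ α) ≤ c₁ * x := by
  have hpow : 0 < c₁ ^ α := rpow_pos_of_pos hc₁ α
  set C := c₂ / c₁ ^ α
  set L := log C
  have hC : exp 1 ≤ C := (le_div_iff₀ hpow).2 hbig
  have hL : 1 ≤ L := by simpa using log_le_log (exp_pos 1) hC
  set A := 1 + L + log L
  have hC0 : 0 < C := (exp_pos 1).trans_le hC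
  have hA : 0 < A := by linarith [log_nonneg hL]
  have hx' : x = α * A / c₁ := by
    rw [hx, mul_div_right_comm, log_mul hC0.ne' (exp_pos 1).ne', log_exp]
    ring
  have hc₁x : c₁ * x = α * A := by
    rw [hx']
    field_simp
  have hc₂x : c₂ * x ^ α = C * (α * A) ^ α := by
    rw [hx', div_rpow (by positivity) hc₁.le]
    ring
  rw [hc₁x, hc₂x, log_mul hC0.ne' (by positivity), log_rpow (by positivity)]
  exact add_mul_log_mul_le hα1 (by linarith) hL

/-- Lemma 18 of Garivier–Kaufmann (2016): for α ∈ [1, e/2] and c₁, c₂ > 0 with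
c₂ ≥ e·c₁^α, the value x = (α/c₁)[log(c₂e/c₁^α) + log log(c₂/c₁^α)] satisfies
c₁·x ≥ log(c₂·x^α). -/
theorem garivier_kaufmann_lemma18
    (α c₁ c₂ : ℝ) (hα1 : 1 ≤ α) (hα2 : α ≤ exp 1 / 2)
    (hc₁ : 0 < c₁) (hc₂ : 0 < c₂) (hbig : exp 1 * c₁ ^ α ≤ c₂)
    (x : ℝ)
    (hx : x = α / c₁ * (log (c₂ * exp 1 / c₁ ^ α) + log (log (c₂ / c₁ ^ α)))) :
    log (c₂ * x ^ α) ≤ c₁ * x :=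
  garivier_kaufmann_lemma18_general α c₁ c₂ hα1 hα2 hc₁ hbig x hx
end

section
/- In the two-armed case K = 2, the quantity T̲(μ) := (sup over w ∈ Σ₂ with w₂/(w₁+w₂) = γ of min over the single alternative of f₂(w;μ))⁻¹ equals T*(μ) := (sup over w ∈ Σ₂ of f₂(w;μ))⁻¹, where f₂(w;μ) = w₁·d(μ₁, m) + w₂·d(μ₂, m) with m = (w₁μ₁+w₂μ₂)/(w₁+w₂), and γ is the unique point with d(μ₁,(1−γ)μ₁+γμ₂) = d(μ₂,(1−γ)μ₁+γμ₂). Prove this in the Gaussian case d(x,y) = (x−y)²/2: then γ = 1/2 and sup_{α∈[0,1]} [α(1−α)(μ₁−μ₂)²/2] is attained at α = 1/2, so T̲ = T* = 8/(μ₁−μ₂)². -/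
/-!
With `d(x, y) = (x - y)² / 2` and `Δ = (μ₁ - μ₂)² / 2`, the point `(1 - z) μ₁ + z μ₂` lies at
divergence `z² Δ` from `μ₁` and `(1 - z)² Δ` from `μ₂`, so `h z = z (1 - z) Δ`. Equalizing the two
divergences forces `z² = (1 - z)²`, i.e. `z = 1/2`, which is also where `z (1 - z)` peaks at `1/4`.
-/

lemma eq_half_of_sq_eq_one_sub_sq {z : ℝ} (h : z ^ 2 = (1 - z) ^ 2) : z = 1 / 2 := by
  linarith [show (1 - z) ^ 2 - z ^ 2 = 1 - 2 * z by ring]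

lemma mul_one_sub_le_quarter (z : ℝ) : z * (1 - z) ≤ 1 / 4 := by
  nlinarith [sq_nonneg (z - 1 / 2)]

/-- Two-armed Gaussian case: the equalizing proportion is γ = 1/2, the sup of
f₂ over the simplex is attained at α = 1/2, and T̲ = T* = 8/(μ₁−μ₂)². -/
theorem two_armed_gaussian_optimality
    (μ₁ μ₂ : ℝ) (h12 : μ₂ < μ₁)
    (d : ℝ → ℝ → ℝ) (hd : ∀ x y, d x y = (x - y)^2 / 2)
    (h : ℝ → ℝ)
    (hh : ∀ z, h z = (1 - z) * d μ₁ ((1 - z) * μ₁ + z * μ₂)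
        + z * d μ₂ ((1 - z) * μ₁ + z * μ₂)) :
    (∀ γ ∈ Set.Ioo (0:ℝ) 1,
      d μ₁ ((1 - γ) * μ₁ + γ * μ₂) = d μ₂ ((1 - γ) * μ₁ + γ * μ₂) → γ = 1/2)
    ∧ (∀ α ∈ Set.Icc (0:ℝ) 1, h α ≤ h (1/2))
    ∧ (h (1/2))⁻¹ = 8 / (μ₁ - μ₂)^2 := by
  set Δ := (μ₁ - μ₂) ^ 2 / 2 with hΔ
  have hΔ_pos : 0 < Δ := by have := sub_pos.2 h12; positivity
  have hd₁ (z : ℝ) : d μ₁ ((1 - z) * μ₁ + z * μ₂) = z ^ 2 * Δ := by rw [hd]; ring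
  have hd₂ (z : ℝ) : d μ₂ ((1 - z) * μ₁ + z * μ₂) = (1 - z) ^ 2 * Δ := by rw [hd]; ring
  have hh' (z : ℝ) : h z = z * (1 - z) * Δ := by rw [hh, hd₁, hd₂]; ring
  refine ⟨fun γ _ hγ => ?_, fun α _ => ?_, ?_⟩
  · rw [hd₁, hd₂] at hγ
    exact eq_half_of_sq_eq_one_sub_sq (mul_right_cancel₀ hΔ_pos.ne' hγ)
  · rw [hh', hh']
    refine mul_le_mul_of_nonneg_right ?_ hΔ_pos.le
    norm_num [mul_one_sub_le_quarter α]
  · rw [hh', hΔ]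
    field_simp
    norm_num
end
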